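/- Let B ∈ ℝ^{3×3} and A = I + B with det A > 0. Define T(A) = (AᵀA)^{1/2} − I and Φ(B) = sym B + (1/2)BᵀB. Then |T(A)|/(2√3) ≤ |Φ(B)| ≤ ((√3 + |A|)/2)·|T(A)|, where |·| is the Frobenius norm. -/

import Mathlib

open Matrix
open scoped Classical

noncomputable def fnorm (A : Matrix (Fin 3) (Fin 3) ℝ) : ℝ :=
  Real.sqrt ((Aᵀ * A).trace)

def SO3 : Set (Matrix (Fin 3) (Fin 3) ℝ) := {Q | Qᵀ * Q = 1 ∧ Q.det = 1}

noncomputable def psdSqrt (M : Matrix (Fin 3) (Fin 3) ℝ) : Matrix (Fin 3) (Fin 3) ℝ :=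
  if h : M.PosSemidef then
    (h.1.eigenvectorUnitary : Matrix (Fin 3) (Fin 3) ℝ) * diagonal (Real.sqrt ∘ h.1.eigenvalues) *
      (star h.1.eigenvectorUnitary : Matrix (Fin 3) (Fin 3) ℝ)
  else 0

noncomputable def symM (B : Matrix (Fin 3) (Fin 3) ℝ) : Matrix (Fin 3) (Fin 3) ℝ :=
  (1/2 : ℝ) • (B + Bᵀ)

noncomputable def PhiM (B : Matrix (Fin 3) (Fin 3) ℝ) : Matrix (Fin 3) (Fin 3) ℝ :=
  symM B + (1/2 : ℝ) • (Bᵀ * B)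

noncomputable def TM (A : Matrix (Fin 3) (Fin 3) ℝ) : Matrix (Fin 3) (Fin 3) ℝ :=
  psdSqrt (Aᵀ * A) - 1

section Aux

attribute [local instance] Matrix.frobeniusSeminormedAddCommGroup Matrix.frobeniusNormedRing

local notation "M3" => Matrix (Fin 3) (Fin 3) ℝ

lemma trace_transpose_mul' (X Y : M3) :
    (Xᵀ * Y).trace = ∑ p : Fin 3 × Fin 3, X p.1 p.2 * Y p.1 p.2 := by
  rw [Fintype.sum_prod_type]
  rw [Finset.sum_comm]
  simp [Matrix.trace, Matrix.mul_apply, Matrix.diag]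

lemma fnorm_eq' (X : M3) :
    fnorm X = Real.sqrt (∑ p : Fin 3 × Fin 3, X p.1 p.2 ^ 2) := by
  rw [fnorm, trace_transpose_mul']
  congr 1
  exact Finset.sum_congr rfl fun p _ => (sq (X p.1 p.2)).symm

lemma fnorm_nonneg' (X : M3) : 0 ≤ fnorm X := Real.sqrt_nonneg _

lemma fnorm_eq_norm (X : M3) : fnorm X = ‖X‖ := by
  rw [Matrix.frobenius_norm_def, fnorm_eq', Real.sqrt_eq_rpow, Fintype.sum_prod_type]
  congr 1
  refine Finset.sum_congr rfl fun i _ => Finset.sum_congr rfl fun j _ => ?_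
  rw [Real.rpow_two, Real.norm_eq_abs, sq_abs]

lemma fnorm_sq' (X : M3) : fnorm X ^ 2 = (Xᵀ * X).trace := by
  rw [fnorm, Real.sq_sqrt]
  rw [trace_transpose_mul']
  exact Finset.sum_nonneg fun p _ => mul_self_nonneg _

lemma fnorm_one : fnorm (1 : M3) = Real.sqrt 3 := by
  rw [fnorm]
  norm_num [Matrix.trace_one]

lemma trace_nonneg_of_posSemidef {P : M3} (hP : P.PosSemidef) : 0 ≤ P.trace := by
  exact hP.trace_nonneg

lemma trace_CS (X Y : M3) : (Xᵀ * Y).trace ≤ fnorm X * fnorm Y := by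
  rw [trace_transpose_mul', fnorm_eq', fnorm_eq']
  exact Real.sum_mul_le_sqrt_mul_sqrt _ _ _



lemma fnorm_two_smul (X : Matrix (Fin 3) (Fin 3) ℝ) :
    fnorm ((2:ℝ) • X) = 2 * fnorm X := by
  rw [fnorm_eq', fnorm_eq']
  have h4 : Real.sqrt 4 = 2 := by
    rw [show (4:ℝ) = 2 ^ 2 by norm_num, Real.sqrt_sq (by norm_num)]
  simp only [Matrix.smul_apply, smul_eq_mul, mul_pow]
  rw [← Finset.mul_sum, show ((2:ℝ))^2 = 4 by norm_num,
    Real.sqrt_mul (by norm_num), h4]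

lemma hTsub_eq (X Y : Matrix (Fin 3) (Fin 3) ℝ) :
    Xᵀ * ((Y + 1) * X) = Xᵀ * Y * X + Xᵀ * X := by
  noncomm_ring

theorem stmt2 (B : Matrix (Fin 3) (Fin 3) ℝ) (hA : 0 < (1 + B).det) :
    fnorm (TM (1 + B)) / (2 * Real.sqrt 3) ≤ fnorm (PhiM B) ∧
    fnorm (PhiM B) ≤ (Real.sqrt 3 + fnorm (1 + B)) / 2 * fnorm (TM (1 + B)) := by
  set A : Matrix (Fin 3) (Fin 3) ℝ := 1 + B with hAdef
  have hM : (Aᵀ * A).PosSemidef := by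
    have := Matrix.posSemidef_conjTranspose_mul_self A
    rwa [Matrix.conjTranspose_eq_transpose_of_trivial] at this
  set U : Matrix (Fin 3) (Fin 3) ℝ :=
    (hM.1.eigenvectorUnitary : Matrix (Fin 3) (Fin 3) ℝ) * diagonal (Real.sqrt ∘ hM.1.eigenvalues) *
      (star hM.1.eigenvectorUnitary : Matrix (Fin 3) (Fin 3) ℝ) with hUdef
  have hpsd : psdSqrt (Aᵀ * A) = U := dif_pos hM
  have hU2 : U * U = Aᵀ * A := by
    have hs := hM.1.spectral_theorem
    rw [Unitary.conjStarAlgAut_apply] at hs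
    have hVV : (star hM.1.eigenvectorUnitary : Matrix (Fin 3) (Fin 3) ℝ) *
        (hM.1.eigenvectorUnitary : Matrix (Fin 3) (Fin 3) ℝ) = 1 :=
      Unitary.star_mul_self_of_mem hM.1.eigenvectorUnitary.2
    have hDD : diagonal (Real.sqrt ∘ hM.1.eigenvalues) * diagonal (Real.sqrt ∘ hM.1.eigenvalues)
        = diagonal (RCLike.ofReal ∘ hM.1.eigenvalues) := by
      rw [diagonal_mul_diagonal]
      congr 1
      funext i
      simp [Real.mul_self_sqrt (hM.eigenvalues_nonneg i)]
    refine Eq.trans ?_ hs.symm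
    rw [hUdef]
    simp only [Matrix.mul_assoc]
    rw [← Matrix.mul_assoc _ (hM.1.eigenvectorUnitary : Matrix (Fin 3) (Fin 3) ℝ), hVV,
      Matrix.one_mul, ← Matrix.mul_assoc (diagonal _) (diagonal _), hDD]
  have hUpsd' : U.PosSemidef := by
    have hD : (diagonal (Real.sqrt ∘ hM.1.eigenvalues)).PosSemidef :=
      posSemidef_diagonal_iff.mpr fun i => Real.sqrt_nonneg _
    have := hD.mul_mul_conjTranspose_same (hM.1.eigenvectorUnitary : Matrix (Fin 3) (Fin 3) ℝ)
    rwa [← Matrix.star_eq_conjTranspose, ← Unitary.coe_star] at this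
  have hUsym : Uᵀ = U := by
    have h := (hUpsd'.1).eq
    rwa [Matrix.conjTranspose_eq_transpose_of_trivial] at h
  have hUpsd : U.PosSemidef := hUpsd'
  have hT : TM A = U - 1 := by rw [TM, hpsd]
  have h2phi : (2:ℝ) • PhiM B = B + Bᵀ + Bᵀ * B := by
    rw [PhiM, symM, smul_add, smul_smul, smul_smul]
    norm_num
  have hexp : Aᵀ * A = 1 + ((2:ℝ) • PhiM B) := by
    rw [h2phi, hAdef]
    simp only [Matrix.transpose_add, Matrix.transpose_one, Matrix.add_mul, Matrix.mul_add,
      Matrix.one_mul, Matrix.mul_one]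
    abel
  have hfac : (U + 1) * (U - 1) = (2:ℝ) • PhiM B := by
    have h : (U + 1) * (U - 1) = U * U - 1 := by noncomm_ring
    rw [h, hU2, hexp, add_sub_cancel_left]
  have hUnorm : fnorm U = fnorm A := by
    rw [fnorm, fnorm, hUsym, hU2]
  -- upper bound
  have hupper : 2 * fnorm (PhiM B) ≤ (Real.sqrt 3 + fnorm A) * fnorm (U - 1) := by
    calc 2 * fnorm (PhiM B) = fnorm ((2:ℝ) • PhiM B) := (fnorm_two_smul _).symm
      _ = fnorm ((U + 1) * (U - 1)) := by rw [hfac]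
      _ = ‖(U + 1) * (U - 1)‖ := fnorm_eq_norm _
      _ ≤ ‖U + 1‖ * ‖U - 1‖ := Matrix.frobenius_norm_mul _ _
      _ ≤ (‖U‖ + ‖(1 : Matrix (Fin 3) (Fin 3) ℝ)‖) * ‖U - 1‖ := by
          gcongr
          exact norm_add_le _ _
      _ = (fnorm U + fnorm 1) * fnorm (U - 1) := by
          rw [fnorm_eq_norm, fnorm_eq_norm, fnorm_eq_norm]
      _ = (Real.sqrt 3 + fnorm A) * fnorm (U - 1) := by rw [hUnorm, fnorm_one, add_comm]
  -- lower bound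
  have h1 : (U - 1)ᵀ * ((2:ℝ) • PhiM B)
      = (U - 1)ᵀ * U * (U - 1) + (U - 1)ᵀ * (U - 1) := by
    rw [← hfac, hTsub_eq]
  have hpsd2 : ((U - 1)ᵀ * U * (U - 1)).PosSemidef := by
    have := hUpsd.conjTranspose_mul_mul_same (U - 1)
    rwa [Matrix.conjTranspose_eq_transpose_of_trivial] at this
  have key : fnorm (U - 1) ^ 2 ≤ ((U - 1)ᵀ * ((2:ℝ) • PhiM B)).trace := by
    rw [h1, Matrix.trace_add, fnorm_sq']
    have := trace_nonneg_of_posSemidef hpsd2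
    linarith
  have hCS : ((U - 1)ᵀ * ((2:ℝ) • PhiM B)).trace
      ≤ fnorm (U - 1) * (2 * fnorm (PhiM B)) := by
    have h := trace_CS (U - 1) ((2:ℝ) • PhiM B)
    rwa [fnorm_two_smul] at h
  have hsq : fnorm (U - 1) ^ 2 ≤ fnorm (U - 1) * (2 * fnorm (PhiM B)) := key.trans hCS
  have hTle : fnorm (U - 1) ≤ 2 * fnorm (PhiM B) := by
    rcases eq_or_lt_of_le (fnorm_nonneg' (U - 1)) with h0 | h0
    · rw [← h0]
      have := fnorm_nonneg' (PhiM B)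
      linarith
    · nlinarith [hsq, h0]
  have h3 : (1:ℝ) ≤ Real.sqrt 3 := by
    rw [show (1:ℝ) = Real.sqrt 1 by simp]
    exact Real.sqrt_le_sqrt (by norm_num)
  have hs3 : (0:ℝ) < Real.sqrt 3 := by positivity
  constructor
  · rw [hT, div_le_iff₀ (by positivity)]
    have hphin := fnorm_nonneg' (PhiM B)
    nlinarith
  · rw [hT]
    linarith

end Aux
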